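/- arXiv:1901.10524 — 3 statements merged into one kernel-verified Lean document; each statement's English description precedes it below -/
import Mathlib

section
/- Let Δ and Δ' = Δ + E be self-adjoint N×N complex matrices with ‖E‖ < 1, where ‖·‖ is the operator norm. Then the Cayley transforms satisfy ‖C(Δ) − C(Δ')‖ ≤ (‖Δ‖ + 1)·‖E‖/(1 − ‖E‖) + ‖E‖. -/
open scoped Matrix.Norms.L2Operator

/-- The Cayley transform of a matrix: `C(Δ) = (Δ - i I) (Δ + i I)⁻¹`. -/
noncomputable def cayleyTransform {N : ℕ} (Δ : Matrix (Fin N) (Fin N) ℂ) :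
    Matrix (Fin N) (Fin N) ℂ :=
  (Δ - Complex.I • 1) * (Δ + Complex.I • 1)⁻¹

/-! The Cayley transform of a self-adjoint `a` is `1 - 2i (a + i)⁻¹`, so by the resolvent
identity `C(a) - C(b) = 2i (a + i)⁻¹ (a - b) (b + i)⁻¹`. The spectrum of `a` is real, so through
the continuous functional calculus `(a + i)⁻¹` is the function `x ↦ (x + i)⁻¹`, of modulus at most
one there; hence `‖C(a) - C(b)‖ ≤ 2 ‖a - b‖`, which is already stronger than the stated bound. -/

open Complex Ring

section CStarAlgebra

variable {A : Type*} [CStarAlgebra A] {a b : A}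

noncomputable def cayley (a : A) : A := (a - I • 1) * (a + I • 1)⁻¹ʳ

lemma IsSelfAdjoint.add_I_ne_zero_of_mem_spectrum (ha : IsSelfAdjoint a) {x : ℂ}
    (hx : x ∈ spectrum ℂ a) : x + I ≠ 0 := by
  intro h
  simpa [ha.im_eq_zero_of_mem_spectrum hx] using congrArg Complex.im h

lemma IsSelfAdjoint.isUnit_add_I_smul_one (ha : IsSelfAdjoint a) : IsUnit (a + I • (1 : A)) := by
  have hI : -I ∉ spectrum ℂ a := fun h ↦ ha.add_I_ne_zero_of_mem_spectrum h (neg_add_cancel I)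
  have := (spectrum.notMem_iff.mp hI).neg
  rwa [Algebra.algebraMap_eq_smul_one, neg_sub, neg_smul, sub_neg_eq_add] at this

lemma IsSelfAdjoint.cfc_inv_add_I (ha : IsSelfAdjoint a) :
    cfc (fun x ↦ (x + I)⁻¹) a = (a + I • (1 : A))⁻¹ʳ := by
  rw [cfc_inv (fun x ↦ x + I) a fun x hx ↦ ha.add_I_ne_zero_of_mem_spectrum hx,
    cfc_add_const I (fun x ↦ x) a, cfc_id' ℂ a, Algebra.algebraMap_eq_smul_one]

lemma IsSelfAdjoint.norm_inverse_add_I_smul_one_le (ha : IsSelfAdjoint a) :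
    ‖(a + I • (1 : A))⁻¹ʳ‖ ≤ 1 := by
  rw [← ha.cfc_inv_add_I]
  refine norm_cfc_le zero_le_one fun x hx ↦ ?_
  have him : (x + I).im = 1 := by simp [ha.im_eq_zero_of_mem_spectrum hx]
  rw [norm_inv]
  refine inv_le_one_of_one_le₀ ?_
  simpa [him] using Complex.abs_im_le_norm (x + I)

lemma IsSelfAdjoint.cayley_eq (ha : IsSelfAdjoint a) :
    cayley a = 1 - (2 * I) • (a + I • (1 : A))⁻¹ʳ := by
  have hsub : a - I • 1 = (a + I • 1) - (2 * I) • (1 : A) := by module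
  rw [cayley, hsub, sub_mul, mul_inverse_cancel _ ha.isUnit_add_I_smul_one, smul_mul_assoc,
    one_mul]

lemma IsSelfAdjoint.norm_cayley_sub_cayley_le (ha : IsSelfAdjoint a) (hb : IsSelfAdjoint b) :
    ‖cayley a - cayley b‖ ≤ 2 * ‖b - a‖ := by
  have hres := Ring.inverse_sub_inverse
    (iff_of_true ha.isUnit_add_I_smul_one hb.isUnit_add_I_smul_one)
  rw [add_sub_add_right_eq_sub] at hres
  rw [norm_sub_rev, ha.cayley_eq, hb.cayley_eq, sub_sub_sub_cancel_left,
    ← smul_sub, hres, norm_smul]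
  calc ‖2 * I‖ * ‖(a + I • 1)⁻¹ʳ * (b - a) * (b + I • 1)⁻¹ʳ‖
      ≤ 2 * (‖(a + I • 1)⁻¹ʳ‖ * ‖b - a‖ * ‖(b + I • 1)⁻¹ʳ‖) := by
        simp only [norm_mul, norm_ofNat, norm_I, mul_one]
        gcongr
        exact norm_mul₃_le
    _ ≤ 2 * (1 * ‖b - a‖ * 1) := by
        gcongr
        exacts [ha.norm_inverse_add_I_smul_one_le, hb.norm_inverse_add_I_smul_one_le]
    _ = 2 * ‖b - a‖ := by ring

end CStarAlgebra

lemma cayleyTransform_eq_cayley {N : ℕ} (Δ : Matrix (Fin N) (Fin N) ℂ) :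
    cayleyTransform Δ = cayley Δ := by
  rw [cayleyTransform, cayley, Matrix.nonsing_inv_eq_ringInverse]

/-- For self-adjoint `Δ` and `Δ' = Δ + E` with `‖E‖ < 1`,
`‖C(Δ) - C(Δ')‖ ≤ (‖Δ‖ + 1) ‖E‖ / (1 - ‖E‖) + ‖E‖`. -/
theorem norm_cayleyTransform_diff_le {N : ℕ} (Δ E : Matrix (Fin N) (Fin N) ℂ)
    (hΔ : IsSelfAdjoint Δ) (hΔ' : IsSelfAdjoint (Δ + E)) (hE : ‖E‖ < 1) :
    ‖cayleyTransform Δ - cayleyTransform (Δ + E)‖ ≤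
      (‖Δ‖ + 1) * (‖E‖ / (1 - ‖E‖)) + ‖E‖ := by
  have hE_le : ‖E‖ ≤ ‖E‖ / (1 - ‖E‖) :=
    le_div_self (norm_nonneg E) (by linarith) (by linarith [norm_nonneg E])
  calc ‖cayleyTransform Δ - cayleyTransform (Δ + E)‖
      ≤ 2 * ‖E‖ := by
        simpa only [cayleyTransform_eq_cayley, add_sub_cancel_left] using
          hΔ.norm_cayley_sub_cayley_le hΔ'
    _ = ‖E‖ + ‖E‖ := two_mul _
    _ ≤ (‖Δ‖ + 1) * (‖E‖ / (1 - ‖E‖)) + ‖E‖ := by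
        gcongr
        exact hE_le.trans (le_mul_of_one_le_left (hE_le.trans' (norm_nonneg E))
          (le_add_of_nonneg_left (norm_nonneg Δ)))
end

section
/- Let M > 0, let p and d be polynomials with complex coefficients such that d(λ) ≠ 0 for every λ ∈ [0, M], and let g = p/d. Then there exists a constant K > 0 (depending only on p, d, and M) such that for all N and all self-adjoint N×N complex matrices Δ and Δ' whose spectra are contained in [0, M], ‖g(Δ) − g(Δ')‖ ≤ K·‖Δ − Δ'‖, where g(Δ) := p(Δ)·d(Δ)^{-1} and ‖·‖ is the operator norm. In particular, rational spectral filters (as in ARMA filters) on graphs with uniformly bounded Laplacians are linearly stable. -/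
/-!
Write `P = p(a)`, `D = d(a)` and `P', D'` for `b`. Then
`P D⁻¹ - P' D'⁻¹ = (P - P' + P D⁻¹ (D' - D)) D'⁻¹`.
Polynomials are Lipschitz on the ball of radius `R` of any normed algebra, with a constant depending
only on their coefficients and `R`, and for a normal element whose spectrum lies in a compact set
`S` the continuous functional calculus bounds `‖a‖`, `‖p(a)‖` and `‖d(a)⁻¹‖` by the suprema of
`|z|`, `|p|` and `1 / |d|` over `S`. None of these constants sees the algebra, so one `K` serves
all matrix sizes at once.
-/

open scoped Matrix.Norms.L2Operator
open Polynomial Finset Ring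

universe u

theorem norm_pow_sub_pow_le {A : Type*} [NormedRing A] {a b : A} {R : ℝ} (ha : ‖a‖ ≤ R)
    (hb : ‖b‖ ≤ R) (n : ℕ) : ‖a ^ n - b ^ n‖ ≤ n * R ^ (n - 1) * ‖a - b‖ := by
  rcases Nat.eq_zero_or_pos n with rfl | hn
  · simp
  induction n, hn using Nat.le_induction with
  | base => simp
  | succ n hn ih =>
    have hR : 0 ≤ R := (norm_nonneg a).trans ha
    have hpow : ‖a ^ n‖ ≤ R ^ n := (norm_pow_le' a hn).trans (by gcongr)
    have hshift : (n : ℝ) * R ^ (n - 1) * R = n * R ^ n := by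
      rw [mul_assoc, ← pow_succ, Nat.sub_add_cancel hn]
    calc ‖a ^ (n + 1) - b ^ (n + 1)‖ = ‖a ^ n * (a - b) + (a ^ n - b ^ n) * b‖ := by
          congr 1; noncomm_ring
      _ ≤ R ^ n * ‖a - b‖ + n * R ^ (n - 1) * ‖a - b‖ * R := by
          refine (norm_add_le _ _).trans (add_le_add ?_ ?_) <;>
            refine (norm_mul_le _ _).trans ?_ <;> gcongr
      _ = (n + 1 : ℕ) * R ^ (n + 1 - 1) * ‖a - b‖ := by
          push_cast
          linear_combination ‖a - b‖ * hshift

namespace Polynomial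

variable {𝕜 : Type*} [NormedField 𝕜]

/-- The derivative at `R` of the majorant `∑ ‖cᵢ‖ Xⁱ` of `f`. -/
noncomputable def lipschitzBound (f : 𝕜[X]) (R : ℝ) : ℝ :=
  ∑ i ∈ range (f.natDegree + 1), ‖f.coeff i‖ * i * R ^ (i - 1)

theorem lipschitzBound_nonneg (f : 𝕜[X]) {R : ℝ} (hR : 0 ≤ R) : 0 ≤ f.lipschitzBound R :=
  sum_nonneg fun _ _ => by positivity

theorem norm_aeval_sub_aeval_le {A : Type*} [NormedRing A] [NormedAlgebra 𝕜 A] (f : 𝕜[X])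
    {a b : A} {R : ℝ} (ha : ‖a‖ ≤ R) (hb : ‖b‖ ≤ R) :
    ‖aeval a f - aeval b f‖ ≤ f.lipschitzBound R * ‖a - b‖ := by
  rw [aeval_eq_sum_range, aeval_eq_sum_range, ← sum_sub_distrib, lipschitzBound, sum_mul]
  refine (norm_sum_le _ _).trans (sum_le_sum fun i _ => ?_)
  rw [← smul_sub, norm_smul, mul_assoc, mul_assoc, ← mul_assoc (i : ℝ)]
  gcongr
  exact norm_pow_sub_pow_le ha hb i

end Polynomial

theorem norm_mul_ringInverse_sub_mul_ringInverse_le {A : Type*} [NormedRing A] {p q u v : A}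
    (hu : IsUnit u) (hv : IsUnit v) :
    ‖p * u⁻¹ʳ - q * v⁻¹ʳ‖ ≤ (‖p - q‖ + ‖p‖ * ‖u⁻¹ʳ‖ * ‖v - u‖) * ‖v⁻¹ʳ‖ := by
  have hinv := Ring.inverse_sub_inverse (iff_of_true hu hv)
  have hsplit : p * u⁻¹ʳ - q * v⁻¹ʳ = (p - q + p * u⁻¹ʳ * (v - u)) * v⁻¹ʳ := by
    calc p * u⁻¹ʳ - q * v⁻¹ʳ = (p - q) * v⁻¹ʳ + p * (u⁻¹ʳ - v⁻¹ʳ) := by noncomm_ring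
      _ = _ := by rw [hinv]; noncomm_ring
  calc ‖p * u⁻¹ʳ - q * v⁻¹ʳ‖ ≤ (‖p - q‖ + ‖p * u⁻¹ʳ * (v - u)‖) * ‖v⁻¹ʳ‖ := by
        rw [hsplit]; exact (norm_mul_le _ _).trans (by gcongr; exact norm_add_le _ _)
    _ ≤ (‖p - q‖ + ‖p‖ * ‖u⁻¹ʳ‖ * ‖v - u‖) * ‖v⁻¹ʳ‖ := by
        gcongr
        exact (norm_mul_le _ _).trans (by gcongr; exact norm_mul_le _ _)

section CStarAlgebra

variable {A : Type*} [CStarAlgebra A] {a b : A}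

theorem IsStarNormal.norm_le_of_forall_spectrum {R : ℝ} (ha : IsStarNormal a) (hR : 0 ≤ R)
    (h : ∀ z ∈ spectrum ℂ a, ‖z‖ ≤ R) : ‖a‖ ≤ R := by
  rw [← cfc_id ℂ a]
  exact norm_cfc_le hR h

theorem IsStarNormal.norm_aeval_le_of_forall_spectrum (p : ℂ[X]) {B : ℝ} (ha : IsStarNormal a)
    (hB : 0 ≤ B) (h : ∀ z ∈ spectrum ℂ a, ‖p.eval z‖ ≤ B) : ‖aeval a p‖ ≤ B := by
  rw [← cfc_polynomial p a]
  exact norm_cfc_le hB h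

theorem IsStarNormal.isUnit_aeval (d : ℂ[X]) (ha : IsStarNormal a)
    (h : ∀ z ∈ spectrum ℂ a, d.eval z ≠ 0) : IsUnit (aeval a d) := by
  rw [← cfc_polynomial d a]
  exact (isUnit_cfc_iff _ a).mpr h

theorem IsStarNormal.norm_ringInverse_aeval_le (d : ℂ[X]) {ε : ℝ} (ha : IsStarNormal a)
    (hε : 0 < ε) (h : ∀ z ∈ spectrum ℂ a, ε ≤ ‖d.eval z‖) : ‖(aeval a d)⁻¹ʳ‖ ≤ ε⁻¹ := by
  have hne : ∀ z ∈ spectrum ℂ a, d.eval z ≠ 0 := fun z hz =>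
    norm_pos_iff.mp (hε.trans_le (h z hz))
  rw [← cfc_polynomial d a, ← cfc_inv _ a hne]
  refine norm_cfc_le (inv_nonneg.mpr hε.le) fun z hz => ?_
  rw [norm_inv]
  exact inv_anti₀ hε (h z hz)

theorem norm_aeval_mul_ringInverse_sub_le (p d : ℂ[X]) {S : Set ℂ} {R B ε : ℝ} (hR : 0 ≤ R)
    (hB : 0 ≤ B) (hε : 0 < ε) (hSR : ∀ z ∈ S, ‖z‖ ≤ R) (hpS : ∀ z ∈ S, ‖p.eval z‖ ≤ B)
    (hdS : ∀ z ∈ S, ε ≤ ‖d.eval z‖) (ha : IsStarNormal a) (hb : IsStarNormal b)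
    (haS : spectrum ℂ a ⊆ S) (hbS : spectrum ℂ b ⊆ S) :
    ‖aeval a p * (aeval a d)⁻¹ʳ - aeval b p * (aeval b d)⁻¹ʳ‖ ≤
      (p.lipschitzBound R + B * ε⁻¹ * d.lipschitzBound R) * ε⁻¹ * ‖a - b‖ := by
  have hdS' : ∀ z ∈ S, d.eval z ≠ 0 := fun z hz => norm_pos_iff.mp (hε.trans_le (hdS z hz))
  have hna : ‖a‖ ≤ R := ha.norm_le_of_forall_spectrum hR fun z hz => hSR z (haS hz)
  have hnb : ‖b‖ ≤ R := hb.norm_le_of_forall_spectrum hR fun z hz => hSR z (hbS hz)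
  have hPa : ‖aeval a p‖ ≤ B :=
    ha.norm_aeval_le_of_forall_spectrum p hB fun z hz => hpS z (haS hz)
  have hDa : ‖(aeval a d)⁻¹ʳ‖ ≤ ε⁻¹ :=
    ha.norm_ringInverse_aeval_le d hε fun z hz => hdS z (haS hz)
  have hDb : ‖(aeval b d)⁻¹ʳ‖ ≤ ε⁻¹ :=
    hb.norm_ringInverse_aeval_le d hε fun z hz => hdS z (hbS hz)
  have hP : ‖aeval a p - aeval b p‖ ≤ p.lipschitzBound R * ‖a - b‖ :=
    p.norm_aeval_sub_aeval_le hna hnb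
  have hD : ‖aeval b d - aeval a d‖ ≤ d.lipschitzBound R * ‖a - b‖ := by
    rw [norm_sub_rev a b]; exact d.norm_aeval_sub_aeval_le hnb hna
  calc _ ≤ (‖aeval a p - aeval b p‖ + ‖aeval a p‖ * ‖(aeval a d)⁻¹ʳ‖ *
        ‖aeval b d - aeval a d‖) * ‖(aeval b d)⁻¹ʳ‖ :=
        norm_mul_ringInverse_sub_mul_ringInverse_le
          (ha.isUnit_aeval d fun z hz => hdS' z (haS hz))
          (hb.isUnit_aeval d fun z hz => hdS' z (hbS hz))
    _ ≤ (p.lipschitzBound R * ‖a - b‖ + B * ε⁻¹ * (d.lipschitzBound R * ‖a - b‖)) * ε⁻¹ := by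
        gcongr
        exact add_nonneg ((norm_nonneg _).trans hP)
          (mul_nonneg (by positivity) ((norm_nonneg _).trans hD))
    _ = _ := by ring

end CStarAlgebra

theorem exists_norm_aeval_mul_ringInverse_sub_le {S : Set ℂ} (hS : IsCompact S) (p d : ℂ[X])
    (hd : ∀ z ∈ S, d.eval z ≠ 0) :
    ∃ K > 0, ∀ (A : Type u) [CStarAlgebra A] (a b : A), IsStarNormal a → IsStarNormal b →
      spectrum ℂ a ⊆ S → spectrum ℂ b ⊆ S →
      ‖aeval a p * (aeval a d)⁻¹ʳ - aeval b p * (aeval b d)⁻¹ʳ‖ ≤ K * ‖a - b‖ := by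
  obtain ⟨R, hR, hSR⟩ := hS.isBounded.exists_pos_norm_le
  obtain ⟨B, hB, hpS⟩ := (hS.image p.continuous).isBounded.exists_pos_norm_le
  obtain ⟨ε, hε, hdS⟩ := hS.exists_forall_le' (f := fun z => ‖d.eval z‖) (by fun_prop)
    fun z hz => norm_pos_iff.mpr (hd z hz)
  set K := (p.lipschitzBound R + B * ε⁻¹ * d.lipschitzBound R) * ε⁻¹
  have hK : 0 ≤ K := by
    have := p.lipschitzBound_nonneg hR.le
    have := d.lipschitzBound_nonneg hR.le
    positivity
  refine ⟨K + 1, by positivity, fun A _ a b ha hb haS hbS => ?_⟩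
  calc _ ≤ K * ‖a - b‖ := norm_aeval_mul_ringInverse_sub_le p d hR.le hB.le hε hSR
        (fun z hz => hpS _ (Set.mem_image_of_mem _ hz)) hdS ha hb haS hbS
    _ ≤ (K + 1) * ‖a - b‖ := by gcongr; linarith

theorem rational_filter_linearly_stable_general (M : ℝ) (p d : Polynomial ℂ)
    (hd : ∀ x : ℝ, x ∈ Set.Icc 0 M → d.eval (x : ℂ) ≠ 0) :
    ∃ K > 0, ∀ (N : ℕ) (Δ Δ' : Matrix (Fin N) (Fin N) ℂ),
      IsSelfAdjoint Δ → IsSelfAdjoint Δ' →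
      spectrum ℂ Δ ⊆ (fun x : ℝ => (x : ℂ)) '' Set.Icc 0 M →
      spectrum ℂ Δ' ⊆ (fun x : ℝ => (x : ℂ)) '' Set.Icc 0 M →
      ‖Polynomial.aeval Δ p * (Polynomial.aeval Δ d)⁻¹ -
          Polynomial.aeval Δ' p * (Polynomial.aeval Δ' d)⁻¹‖ ≤ K * ‖Δ - Δ'‖ := by
  obtain ⟨K, hK, hlip⟩ := exists_norm_aeval_mul_ringInverse_sub_le
    (isCompact_Icc.image Complex.continuous_ofReal) p d (by rintro _ ⟨x, hx, rfl⟩; exact hd x hx)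
  refine ⟨K, hK, fun N Δ Δ' hΔ hΔ' hsΔ hsΔ' => ?_⟩
  simpa only [Matrix.nonsing_inv_eq_ringInverse] using
    hlip _ Δ Δ' hΔ.isStarNormal hΔ'.isStarNormal hsΔ hsΔ'

/-- Let `M > 0` and let `p, d` be complex polynomials with `d` nonvanishing on
`[0, M]`. Then there is `K > 0` such that for all `N` and all self-adjoint `N × N` complex
matrices `Δ, Δ'` with spectra contained in `[0, M]`,
`‖p(Δ) d(Δ)⁻¹ - p(Δ') d(Δ')⁻¹‖ ≤ K ‖Δ - Δ'‖`. -/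
theorem rational_filter_linearly_stable (M : ℝ) (hM : 0 < M) (p d : Polynomial ℂ)
    (hd : ∀ x : ℝ, x ∈ Set.Icc 0 M → d.eval (x : ℂ) ≠ 0) :
    ∃ K > 0, ∀ (N : ℕ) (Δ Δ' : Matrix (Fin N) (Fin N) ℂ),
      IsSelfAdjoint Δ → IsSelfAdjoint Δ' →
      spectrum ℂ Δ ⊆ (fun x : ℝ => (x : ℂ)) '' Set.Icc 0 M →
      spectrum ℂ Δ' ⊆ (fun x : ℝ => (x : ℂ)) '' Set.Icc 0 M →
      ‖Polynomial.aeval Δ p * (Polynomial.aeval Δ d)⁻¹ -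
          Polynomial.aeval Δ' p * (Polynomial.aeval Δ' d)⁻¹‖ ≤ K * ‖Δ - Δ'‖ :=
  rational_filter_linearly_stable_general M p d hd
end

section
/- Let g : ℝ → ℂ be a smooth (infinitely differentiable) compactly supported function. Define q on the unit circle by q(z) = g(i(1+z)/(1−z)) for z ≠ 1 and q(1) = 0, i.e., q(C(λ)) = g(λ) for all λ ∈ ℝ where C(λ) = (λ−i)/(λ+i) is the scalar Cayley transform. Then q is continuous on the unit circle, and its Fourier coefficients c_l = (1/2π)∫_0^{2π} q(e^{iθ}) e^{-ilθ} dθ satisfy Σ_{l∈ℤ} |l|·|c_l| < ∞. -/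
open Complex Real Set intervalIntegral MeasureTheory Filter

/-- The pullback of a filter `g : ℝ → ℂ` through the inverse Cayley transform: on the unit
circle, `q (C λ) = g λ` where `C λ = (λ - i)/(λ + i)`, since `C⁻¹(z) = i (1 + z)/(1 - z)`;
we set `q 1 = 0`. -/
noncomputable def cayleyPullback (g : ℝ → ℂ) : ℂ → ℂ := fun z =>
  if z = 1 then 0 else g ((Complex.I * (1 + z) / (1 - z)).re)

/-- The `l`-th classical Fourier coefficient of a function `q` on the unit circle:
`c_l = (1/(2π)) ∫_0^{2π} q(e^{iθ}) e^{-i l θ} dθ`. -/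
noncomputable def circleFourierCoeff (q : ℂ → ℂ) (l : ℤ) : ℂ :=
  (1 / (2 * (Real.pi : ℂ))) * ∫ θ in (0 : ℝ)..(2 * Real.pi),
    q (Complex.exp (Complex.I * θ)) * Complex.exp (-Complex.I * l * θ)

lemma cayley_im_zero {z : ℂ} (hz : ‖z‖ = 1) (h1 : z ≠ 1) :
    (Complex.I * (1 + z) / (1 - z)).im = 0 := by
  have hzz : z * (starRingEnd ℂ) z = 1 := by
    rw [Complex.mul_conj]; norm_cast; rw [← Complex.sq_norm, hz]; norm_num
  have h1z : (1 : ℂ) - z ≠ 0 := by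
    intro h; apply h1; linear_combination -h
  have hc1z : (1 : ℂ) - (starRingEnd ℂ) z ≠ 0 := by
    intro h
    apply h1
    have h2 : (starRingEnd ℂ) z = 1 := by linear_combination -h
    calc z = (starRingEnd ℂ) ((starRingEnd ℂ) z) := by rw [Complex.conj_conj]
    _ = 1 := by rw [h2]; simp
  rw [← Complex.conj_eq_iff_im]
  simp only [map_div₀, map_mul, map_add, map_sub, map_one, Complex.conj_I]
  rw [div_eq_div_iff hc1z h1z]
  linear_combination (2*Complex.I) * hzz

/-- Vanishing of the pullback near `1` on the circle. -/
lemma cayleyPullback_eq_zero {g : ℝ → ℂ} {R : ℝ} (hR : 1 ≤ R)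
    (hgR : ∀ x : ℝ, R ≤ |x| → g x = 0) {z : ℂ} (hz : ‖z‖ = 1)
    (hsmall : ‖1 - z‖ < min 1 (1/R)) : cayleyPullback g z = 0 := by
  rcases eq_or_ne z 1 with rfl | h1
  · simp [cayleyPullback]
  rw [cayleyPullback, if_neg h1]
  apply hgR
  have him := cayley_im_zero hz h1
  have h1z : (1 : ℂ) - z ≠ 0 := by
    intro h; apply h1; linear_combination -h
  have habs : |(Complex.I * (1 + z) / (1 - z)).re| =
      ‖1 + z‖ / ‖1 - z‖ := by
    rw [Complex.abs_re_eq_norm.mpr him, norm_div, norm_mul, Complex.norm_I, one_mul]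
  rw [habs]
  have h2 : (1 : ℝ) ≤ ‖1 + z‖ := by
    have h3 := norm_sub_norm_le (2 : ℂ) (1 - z)
    have : (2:ℂ) - (1 - z) = 1 + z := by ring
    rw [this] at h3
    have h4 : ‖(2 : ℂ)‖ = 2 := by simp
    rw [h4] at h3
    have h5 : ‖1 - z‖ ≤ 1 := le_of_lt (lt_of_lt_of_le hsmall (min_le_left _ _))
    linarith
  have hpos : 0 < ‖1 - z‖ := by
    simpa [norm_pos_iff] using h1z
  have h6 : ‖1 - z‖ ≤ 1 / R :=
    le_of_lt (lt_of_lt_of_le hsmall (min_le_right _ _))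
  have hR0 : (0:ℝ) < R := lt_of_lt_of_le one_pos hR
  calc R = 1 / (1 / R) := by field_simp
  _ ≤ 1 / ‖1 - z‖ := by
      apply one_div_le_one_div_of_le hpos h6
  _ ≤ ‖1 + z‖ / ‖1 - z‖ := by
      gcongr

lemma cayleyPullback_continuousOn {g : ℝ → ℂ} (hgc : Continuous g) {R : ℝ} (hR : 1 ≤ R)
    (hgR : ∀ x : ℝ, R ≤ |x| → g x = 0) :
    ContinuousOn (cayleyPullback g) {z : ℂ | ‖z‖ = 1} := by
  intro z0 hz0
  rcases eq_or_ne z0 1 with rfl | h1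
  · have hmin : (0:ℝ) < min 1 (1/R) := by
      have : (0:ℝ) < 1/R := by positivity
      exact lt_min one_pos this
    have hev : cayleyPullback g =ᶠ[nhdsWithin 1 {z : ℂ | ‖z‖ = 1}] fun _ => 0 := by
      have hcont : Continuous fun z : ℂ => ‖1 - z‖ :=
        continuous_norm.comp (continuous_const.sub continuous_id)
      have h0 : ‖1 - (1:ℂ)‖ < min 1 (1/R) := by simpa using hmin
      have hone : ∀ᶠ z in nhds (1:ℂ), ‖1 - z‖ < min 1 (1/R) :=
        (hcont.continuousAt (x := (1:ℂ))).eventually_lt_const h0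
      filter_upwards [nhdsWithin_le_nhds hone, self_mem_nhdsWithin] with z hz hzs
      exact cayleyPullback_eq_zero hR hgR hzs hz
    have h10 : cayleyPullback g 1 = 0 := if_pos rfl
    unfold ContinuousWithinAt
    rw [h10]
    exact Tendsto.congr' hev.symm tendsto_const_nhds
  · have hne : (1:ℂ) - z0 ≠ 0 := sub_ne_zero.mpr (Ne.symm h1)
    have hf0 : ContinuousAt (fun z : ℂ => g ((Complex.I * (1 + z) / (1 - z)).re)) z0 := by
      apply hgc.continuousAt.comp
      apply Complex.continuous_re.continuousAt.comp
      exact ((continuous_const.mul (continuous_const.add continuous_id)).continuousAt).div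
        ((continuous_const.sub continuous_id).continuousAt) hne
    have heq : (fun z : ℂ => g ((Complex.I * (1 + z) / (1 - z)).re))
        =ᶠ[nhds z0] cayleyPullback g := by
      filter_upwards [isOpen_ne.mem_nhds h1] with z hz
      exact (if_neg hz).symm
    exact (hf0.congr heq).continuousWithinAt

lemma cayleyPullback_comp_exp_smooth {g : ℝ → ℂ} (hg : ContDiff ℝ (⊤ : ℕ∞) g) {R : ℝ} (hR : 1 ≤ R)
    (hgR : ∀ x : ℝ, R ≤ |x| → g x = 0) :
    ContDiff ℝ (⊤ : ℕ∞) (fun θ : ℝ => cayleyPullback g (Complex.exp (Complex.I * θ))) := by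
  rw [contDiff_iff_contDiffAt]
  intro θ0
  have hE1 : ContDiff ℝ (⊤ : ℕ∞) (fun θ : ℝ => (Complex.I * θ : ℂ)) :=
    contDiff_const.mul Complex.ofRealCLM.contDiff
  have hE2 : ContDiff ℝ (⊤ : ℕ∞) (Complex.exp) := Complex.contDiff_exp
  have hE : ContDiff ℝ (⊤ : ℕ∞) (fun θ : ℝ => Complex.exp (Complex.I * θ)) := hE2.comp hE1
  have habs1 : ∀ θ : ℝ, ‖Complex.exp (Complex.I * θ)‖ = 1 := by
    intro θ
    rw [Complex.norm_exp]
    simp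
  by_cases hc : Complex.exp (Complex.I * θ0) = 1
  · have hmin : (0:ℝ) < min 1 (1/R) := by
      have : (0:ℝ) < 1/R := by positivity
      exact lt_min one_pos this
    have hcont : Continuous fun θ : ℝ => ‖1 - Complex.exp (Complex.I * θ)‖ :=
      continuous_norm.comp (continuous_const.sub hE.continuous)
    have h0 : ‖1 - Complex.exp (Complex.I * θ0)‖ < min 1 (1/R) := by
      rw [hc]; simpa using hmin
    have hev : ∀ᶠ θ : ℝ in nhds θ0,
        cayleyPullback g (Complex.exp (Complex.I * θ)) = 0 := by
      filter_upwards [(hcont.continuousAt (x := θ0)).eventually_lt_const h0] with θ hθ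
      exact cayleyPullback_eq_zero hR hgR (habs1 θ) hθ
    exact contDiffAt_const.congr_of_eventuallyEq hev
  · have hne : (1:ℂ) - Complex.exp (Complex.I * θ0) ≠ 0 := sub_ne_zero.mpr (Ne.symm hc)
    have hnum : ContDiffAt ℝ (⊤ : ℕ∞) (fun θ : ℝ =>
        Complex.I * (1 + Complex.exp (Complex.I * θ))) θ0 :=
      (contDiff_const.mul (contDiff_const.add hE)).contDiffAt
    have hden : ContDiffAt ℝ (⊤ : ℕ∞) (fun θ : ℝ => 1 - Complex.exp (Complex.I * θ)) θ0 :=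
      (contDiff_const.sub hE).contDiffAt
    have hinv : ContDiffAt ℝ (⊤ : ℕ∞) (fun θ : ℝ => (1 - Complex.exp (Complex.I * θ))⁻¹) θ0 :=
      (contDiffAt_inv ℝ hne).comp θ0 hden
    have hinner : ContDiffAt ℝ (⊤ : ℕ∞) (fun θ : ℝ => Complex.I * (1 + Complex.exp (Complex.I * θ)) /
        (1 - Complex.exp (Complex.I * θ))) θ0 := by
      simpa only [div_eq_mul_inv] using hnum.mul hinv
    have hre : ContDiffAt ℝ (⊤ : ℕ∞) (fun θ : ℝ => (Complex.I * (1 + Complex.exp (Complex.I * θ)) /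
        (1 - Complex.exp (Complex.I * θ))).re) θ0 :=
      (Complex.reCLM.contDiff.contDiffAt).comp θ0 hinner
    have hsm : ContDiffAt ℝ (⊤ : ℕ∞) (fun θ : ℝ =>
        g ((Complex.I * (1 + Complex.exp (Complex.I * θ)) /
          (1 - Complex.exp (Complex.I * θ))).re)) θ0 :=
      (hg.contDiffAt).comp θ0 hre
    apply hsm.congr_of_eventuallyEq
    have hU : IsOpen {θ : ℝ | Complex.exp (Complex.I * θ) ≠ 1} :=
      isOpen_ne.preimage hE.continuous
    filter_upwards [hU.mem_nhds hc] with θ hθ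
    exact if_neg hθ

lemma two_pi_pos' : (0:ℝ) < 2 * π := by positivity

lemma circleFourierCoeff_eq (q : ℂ → ℂ) (l : ℤ) :
    circleFourierCoeff q l =
      fourierCoeffOn two_pi_pos' (fun θ : ℝ => q (Complex.exp (Complex.I * θ))) l := by
  rw [circleFourierCoeff, fourierCoeffOn_eq_integral]
  rw [Complex.real_smul]
  congr 1
  · norm_num
  · apply intervalIntegral.integral_congr
    intro x hx
    simp only
    rw [fourier_coe_apply, smul_eq_mul, mul_comm]
    congr 1
    congr 1
    have hpi : (π : ℂ) ≠ 0 := by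
      simpa using Real.pi_ne_zero
    field_simp
    push_cast
    ring

lemma norm_coeff_le_step (f : ℝ → ℂ) (hf : ContDiff ℝ (⊤ : ℕ∞) f) (hper : f (2 * π) = f 0)
    {n : ℤ} (hn : n ≠ 0) :
    ‖fourierCoeffOn two_pi_pos' f n‖ = ‖fourierCoeffOn two_pi_pos' (deriv f) n‖ / |(n : ℝ)| := by
  have hd : ∀ x ∈ Set.uIcc (0:ℝ) (2 * π), HasDerivAt f (deriv f x) x := fun x _ =>
    ((hf.differentiable (by norm_num)) x).hasDerivAt
  have hint : IntervalIntegrable (deriv f) volume 0 (2 * π) :=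
    (hf.continuous_deriv (by norm_num)).intervalIntegrable _ _
  rw [fourierCoeffOn_of_hasDerivAt two_pi_pos' hn hd hint]
  rw [hper, sub_self, mul_zero, zero_sub, norm_mul, norm_neg, norm_mul]
  have h1 : ‖(1:ℂ) / (-2 * ↑π * I * ↑n)‖ = 1 / (2 * π * |(n:ℝ)|) := by
    rw [norm_div, norm_one]
    simp only [norm_mul, norm_neg, Complex.norm_I, Complex.norm_real, Real.norm_eq_abs,
      Complex.norm_intCast, Complex.norm_two]
    rw [abs_of_pos Real.pi_pos]
    ring_nf
  have h2 : ‖((2 * π : ℝ) : ℂ) - ((0 : ℝ) : ℂ)‖ = 2 * π := by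
    rw [← Complex.ofReal_sub, sub_zero, Complex.norm_real, Real.norm_eq_abs,
      abs_of_pos two_pi_pos']
  rw [h1, h2]
  have hn' : |(n:ℝ)| ≠ 0 := by
    simp only [ne_eq, abs_eq_zero, Int.cast_eq_zero]
    exact hn
  field_simp

lemma norm_coeff_le_bound (f : ℝ → ℂ) {M : ℝ}
    (hM : ∀ x ∈ Set.Icc (0:ℝ) (2 * π), ‖f x‖ ≤ M) (n : ℤ) :
    ‖fourierCoeffOn two_pi_pos' f n‖ ≤ M := by
  rw [fourierCoeffOn_eq_integral, norm_smul]
  have h1 : ‖(1 / (2 * π - 0) : ℝ)‖ = 1 / (2 * π) := by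
    rw [sub_zero, Real.norm_eq_abs, abs_of_pos (by positivity)]
  have h2 : ‖∫ x in (0:ℝ)..(2 * π), fourier (-n) (x : AddCircle (2 * π - 0)) • f x‖
      ≤ M * |2 * π - 0| := by
    apply intervalIntegral.norm_integral_le_of_norm_le_const
    intro x hx
    have hx' : x ∈ Set.Icc (0:ℝ) (2 * π) := by
      rw [Set.uIoc_of_le (le_of_lt two_pi_pos')] at hx
      exact Set.mem_Icc_of_Ioc hx
    rw [norm_smul]
    have h3 : ‖(fourier (-n) (x : AddCircle (2 * π - 0)) : ℂ)‖ = 1 := by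
      rw [fourier_apply, Circle.norm_coe]
    rw [h3, one_mul]
    exact hM x hx'
  calc ‖(1 / (2 * π - 0) : ℝ)‖ * ‖∫ x in (0:ℝ)..(2 * π),
        fourier (-n) (x : AddCircle (2 * π - 0)) • f x‖
      ≤ (1 / (2 * π)) * (M * |2 * π - 0|) := by
        rw [h1]; exact mul_le_mul_of_nonneg_left h2 (by positivity)
    _ = M := by
        rw [sub_zero, abs_of_pos two_pi_pos']
        have : (2:ℝ) * π ≠ 0 := ne_of_gt two_pi_pos'
        field_simp

/-- If `g : ℝ → ℂ` is smooth and compactly supported, then the function `q` on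
the unit circle defined by `q (C λ) = g λ` (with `q 1 = 0`), where `C` is the scalar Cayley
transform, is continuous on the unit circle and its Fourier coefficients `c_l` satisfy
`∑_{l ∈ ℤ} |l| |c_l| < ∞`; i.e., `g` belongs to the Cayley smoothness space. -/
theorem smooth_compactly_supported_mem_cayley_smoothness (g : ℝ → ℂ)
    (hg : ContDiff ℝ (⊤ : ℕ∞) g) (hsupp : HasCompactSupport g) :
    ContinuousOn (cayleyPullback g) {z : ℂ | ‖z‖ = 1} ∧
    Summable fun l : ℤ =>
      |(l : ℝ)| * ‖circleFourierCoeff (cayleyPullback g) l‖ := by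
  obtain ⟨R0, hR0pos, hgR0⟩ := hsupp.exists_pos_le_norm
  set R := max R0 1 with hRdef
  have hR : 1 ≤ R := le_max_right _ _
  have hgR : ∀ x : ℝ, R ≤ |x| → g x = 0 := fun x hx =>
    hgR0 x (by rw [Real.norm_eq_abs]; exact le_trans (le_max_left _ _) hx)
  refine ⟨cayleyPullback_continuousOn hg.continuous hR hgR, ?_⟩
  set h : ℝ → ℂ := fun θ => cayleyPullback g (Complex.exp (Complex.I * θ)) with hhdef
  have hhω : ContDiff ℝ (⊤ : ℕ∞) h := cayleyPullback_comp_exp_smooth hg hR hgR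
  have hh : ContDiff ℝ (⊤ : ℕ∞) h := hhω.of_le (by simp)
  have hper : Function.Periodic h (2 * π) := by
    intro θ
    simp only [hhdef]
    congr 1
    have harg : Complex.I * ((θ + 2 * π : ℝ) : ℂ) =
        Complex.I * (θ : ℂ) + 2 * (π : ℂ) * Complex.I := by push_cast; ring
    rw [harg, Complex.exp_add, Complex.exp_two_pi_mul_I, mul_one]
  have hh1 : ContDiff ℝ (⊤ : ℕ∞) (deriv h) := (contDiff_infty_iff_deriv.mp hh).2
  have hh2 : ContDiff ℝ (⊤ : ℕ∞) (deriv (deriv h)) := (contDiff_infty_iff_deriv.mp hh1).2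
  have hh3 : ContDiff ℝ (⊤ : ℕ∞) (deriv (deriv (deriv h))) := (contDiff_infty_iff_deriv.mp hh2).2
  have hp0 : h (2 * π) = h 0 := by simpa using hper 0
  have hshift : (fun x : ℝ => h (x + 2 * π)) = h := funext hper
  have hper1 : Function.Periodic (deriv h) (2 * π) := by
    intro x
    rw [← deriv_comp_add_const, hshift]
  have hper2 : Function.Periodic (deriv (deriv h)) (2 * π) := by
    intro x
    have hshift1 : (fun x : ℝ => deriv h (x + 2 * π)) = deriv h := funext hper1
    rw [← deriv_comp_add_const, hshift1]
  have hp1 : deriv h (2 * π) = deriv h 0 := by simpa using hper1 0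
  have hp2 : deriv (deriv h) (2 * π) = deriv (deriv h) 0 := by simpa using hper2 0
  obtain ⟨M, hMb⟩ := isCompact_Icc.exists_bound_of_continuousOn
    (hh3.continuous.continuousOn (s := Set.Icc (0:ℝ) (2 * π)))
  have hM0 : 0 ≤ M :=
    le_trans (norm_nonneg _) (hMb 0 ⟨le_refl _, le_of_lt two_pi_pos'⟩)
  have hkey : ∀ l : ℤ, l ≠ 0 →
      ‖fourierCoeffOn two_pi_pos' h l‖ ≤ M / |(l:ℝ)| ^ 3 := by
    intro l hl
    have hla : (0:ℝ) < |(l:ℝ)| := by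
      simp only [abs_pos, ne_eq, Int.cast_eq_zero]
      exact hl
    have e1 := norm_coeff_le_step h hh hp0 hl
    have e2 := norm_coeff_le_step (deriv h) hh1 hp1 hl
    have e3 := norm_coeff_le_step (deriv (deriv h)) hh2 hp2 hl
    have e4 := norm_coeff_le_bound (deriv (deriv (deriv h))) hMb l
    rw [e1, e2, e3, div_div, div_div]
    calc ‖fourierCoeffOn two_pi_pos' (deriv (deriv (deriv h))) l‖ / (|(l:ℝ)| * (|(l:ℝ)| * |(l:ℝ)|))
        ≤ M / (|(l:ℝ)| * (|(l:ℝ)| * |(l:ℝ)|)) := by gcongr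
      _ = M / |(l:ℝ)| ^ 3 := by ring_nf
  have hsum : Summable fun l : ℤ => M * (1 / (l:ℝ) ^ 2) :=
    (summable_one_div_int_pow.mpr one_lt_two).mul_left M
  apply Summable.of_nonneg_of_le (fun l => by positivity) ?_ hsum
  intro l
  rcases eq_or_ne l 0 with rfl | hl
  · simp
  · have hla : (0:ℝ) < |(l:ℝ)| := by
      simp only [abs_pos, ne_eq, Int.cast_eq_zero]
      exact hl
    have hcoeff : circleFourierCoeff (cayleyPullback g) l = fourierCoeffOn two_pi_pos' h l :=
      circleFourierCoeff_eq (cayleyPullback g) l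
    rw [hcoeff]
    calc |(l:ℝ)| * ‖fourierCoeffOn two_pi_pos' h l‖
        ≤ |(l:ℝ)| * (M / |(l:ℝ)| ^ 3) := by
          exact mul_le_mul_of_nonneg_left (hkey l hl) (le_of_lt hla)
      _ = M * (1 / (l:ℝ) ^ 2) := by
          rw [show ((l:ℝ)) ^ 2 = |(l:ℝ)| ^ 2 from (_root_.sq_abs _).symm]
          field_simp
end
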